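/- Let ξ_n > 0 and η_n > 0 be sequences with ξ_n η_n → 0 and n^{1/2} η_n → ∞, and let k_n be integers with 1 ≤ k_n < n such that n − k_n is eventually constant equal to m. Suppose θ_n ∈ ℝ and σ_n ∈ (0,∞) satisfy θ_n/(σ_n ξ_n η_n) → ζ in the extended real line. For each n let Z_n have law N(θ_n, σ_n²ξ_n²/n), let S_n be independent of Z_n with density ρ_{n−k_n}, and let μ_n be the law of σ_n^{−1}(ξ_n η_n)^{−1}(θ̃_{H,n} − θ_n) where θ̃_{H,n} = Z_n·1(|Z_n| > σ_n S_n ξ_n η_n). Then: if ζ ∈ ℝ, μ_n converges weakly to (∫_{|ζ|}^∞ ρ_m(s) ds)·δ_{−ζ} + (1 − ∫_{|ζ|}^∞ ρ_m(s) ds)·δ_0; if |ζ| = ∞, μ_n converges weakly to δ_0. -/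

import Mathlib

open MeasureTheory ProbabilityTheory Filter Set

/-- Standard normal cdf. -/
noncomputable def Phi (x : ℝ) : ℝ :=
  ∫ t in Iic x, (Real.sqrt (2 * Real.pi))⁻¹ * Real.exp (-t ^ 2 / 2)

/-- Standard normal pdf. -/
noncomputable def stdPhi (t : ℝ) : ℝ :=
  (Real.sqrt (2 * Real.pi))⁻¹ * Real.exp (-t ^ 2 / 2)

/-- Extension of `Phi` to the extended reals, with `PhiE ⊤ = 1` and `PhiE ⊥ = 0`. -/
noncomputable def PhiE (z : EReal) : ℝ :=
  if z = ⊤ then 1 else if z = ⊥ then 0 else Phi z.toReal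

/-- Density of `m^{-1/2}` times the square root of a chi-square with `m` degrees of freedom. -/
noncomputable def rho (m : ℕ) (s : ℝ) : ℝ :=
  if 0 < s then
    (2 : ℝ) ^ ((1 : ℝ) - (m : ℝ) / 2) * (Real.Gamma ((m : ℝ) / 2))⁻¹ * Real.sqrt m *
      ((m : ℝ) * s ^ 2) ^ (((m : ℝ) - 1) / 2) * Real.exp (-(m : ℝ) * s ^ 2 / 2)
  else 0

/-- Joint law of the least-squares coordinate `Z ~ N(θ, σ²ξ²/n)` and the independent
variance-estimator ratio `S` with density `rho m`. -/
noncomputable def jointMeas (n m : ℕ) (ξ θ σ : ℝ) : Measure (ℝ × ℝ) :=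
  (gaussianReal θ (Real.toNNReal (σ ^ 2 * ξ ^ 2 / n))).prod
    (volume.withDensity fun s => ENNReal.ofReal (rho m s))

/-- Feasible hard-thresholding estimator `Z · 1(|Z| > σSξη)`. -/
noncomputable def hardF (σ ξ η : ℝ) (p : ℝ × ℝ) : ℝ :=
  if σ * p.2 * ξ * η < |p.1| then p.1 else 0

/-- Feasible soft-thresholding estimator `sign(Z)(|Z| − σSξη)₊`. -/
noncomputable def softF (σ ξ η : ℝ) (p : ℝ × ℝ) : ℝ :=
  Real.sign p.1 * max (|p.1| - σ * p.2 * ξ * η) 0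

/-- Feasible adaptive soft-thresholding estimator `Z(1 − σ²S²ξ²η²/Z²)₊`. -/
noncomputable def adaptF (σ ξ η : ℝ) (p : ℝ × ℝ) : ℝ :=
  if p.1 = 0 then 0 else p.1 * max (1 - (σ * p.2 * ξ * η) ^ 2 / p.1 ^ 2) 0

/-- Weak convergence of a sequence of Borel measures on `ℝ`: integrals of every bounded
continuous function converge. -/
def WeakConv (μ : ℕ → Measure ℝ) (ν : Measure ℝ) : Prop :=
  ∀ f : ℝ → ℝ, Continuous f → (∃ C : ℝ, ∀ x, |f x| ≤ C) →
    Tendsto (fun n => ∫ x, f x ∂(μ n)) atTop (nhds (∫ x, f x ∂ν))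

open scoped Topology ENNReal NNReal

/-!
Write `Z = θ + σ ξ n^{-1/2} G` with `G` standard normal. In units of `σ ξ η`, the
hard-thresholding error is `hardThreshold S (c + ε G) - c` with `c = θ / (σ ξ η)` and
`ε = (√n η)⁻¹ → 0`, and `S` has the fixed law `ρ_m` as soon as `n - k_n = m`. For fixed `(G, S)`
this error tends to `-ζ` if `S > |ζ|` and to `0` if `S < |ζ|`, and to `0` whenever `|c| → ∞`.
Since `S` has no atoms, dominated convergence turns this pointwise convergence into weak
convergence of the laws.
-/

noncomputable def hardThreshold (t x : ℝ) : ℝ :=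
  if t < |x| then x else 0

@[fun_prop]
lemma Measurable.hardThreshold {α : Type*} [MeasurableSpace α] {f g : α → ℝ}
    (hf : Measurable f) (hg : Measurable g) :
    Measurable fun a => hardThreshold (f a) (g a) :=
  Measurable.ite (measurableSet_lt hf hg.abs) hg measurable_const

lemma hardThreshold_mul_mul {a : ℝ} (ha : 0 < a) (t x : ℝ) :
    hardThreshold (a * t) (a * x) = a * hardThreshold t x := by
  simp only [hardThreshold, abs_mul, abs_of_pos ha, mul_lt_mul_iff_right₀ ha]
  split_ifs <;> simp

lemma hardF_eq_hardThreshold (σ ξ η : ℝ) (p : ℝ × ℝ) :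
    hardF σ ξ η p = hardThreshold (σ * p.2 * ξ * η) p.1 := rfl

lemma gaussianReal_eq_map_std (μ : ℝ) (v : ℝ≥0) :
    gaussianReal μ v = (gaussianReal 0 1).map (fun g => μ + √(v : ℝ) * g) := by
  have hcomp : (fun g => μ + √(v : ℝ) * g) = (· + μ) ∘ (√(v : ℝ) * ·) := by
    funext g; simp [add_comm]
  rw [hcomp, ← Measure.map_map (measurable_add_const μ) (measurable_const_mul _),
    gaussianReal_map_const_mul, gaussianReal_map_add_const]
  congr
  · simp
  · ext; simp

lemma map_prod_gaussianReal_scaled_hardF {ν : Measure ℝ} [SFinite ν] {n : ℕ} (hn : n ≠ 0)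
    {σ ξ η θ : ℝ} (hσ : 0 < σ) (hξ : 0 < ξ) (hη : 0 < η) :
    ((gaussianReal θ (σ ^ 2 * ξ ^ 2 / n).toNNReal).prod ν).map
        (fun p => σ⁻¹ * (ξ * η)⁻¹ * (hardF σ ξ η p - θ)) =
      ((gaussianReal 0 1).prod ν).map
        (fun q => hardThreshold q.2 (θ / (σ * ξ * η) + (√n * η)⁻¹ * q.1) - θ / (σ * ξ * η)) := by
  have hb : 0 < σ * ξ * η := by positivity
  have hsd : √((σ ^ 2 * ξ ^ 2 / n).toNNReal : ℝ) = σ * ξ / √n := by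
    rw [Real.coe_toNNReal _ (by positivity), Real.sqrt_div' _ (Nat.cast_nonneg n),
      Real.sqrt_mul' _ (sq_nonneg ξ), Real.sqrt_sq hσ.le, Real.sqrt_sq hξ.le]
  simp only [hardF_eq_hardThreshold]
  rw [gaussianReal_eq_map_std, hsd, ← Measure.map_id (μ := ν),
    Measure.map_prod_map _ _ (by fun_prop) measurable_id,
    Measure.map_map (by fun_prop) (by fun_prop), Measure.map_id]
  congr 1
  funext ⟨g, s⟩
  simp only [Function.comp_apply, Prod.map_apply, id]
  rw [show σ * s * ξ * η = σ * ξ * η * s by ring,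
    show θ + σ * ξ / √n * g = σ * ξ * η * (θ / (σ * ξ * η) + (√n * η)⁻¹ * g) by field_simp,
    hardThreshold_mul_mul hb]
  field_simp

lemma rho_nonneg (m : ℕ) (s : ℝ) : 0 ≤ rho m s := by
  unfold rho
  split_ifs <;> positivity

-- That is, `S²` has the Gamma(m/2, m/2) law of `χ²_m / m`.
lemma rho_eq_mul_gammaPDFReal {m : ℕ} (hm : m ≠ 0) {s : ℝ} (hs : 0 < s) :
    rho m s = 2 * s * gammaPDFReal (m / 2) (m / 2) (s ^ 2) := by
  have hm0 : (0 : ℝ) < m := by positivity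
  have hs2 : 0 < s ^ 2 := by positivity
  have hmpow : (m : ℝ) ^ (m / 2 : ℝ) = √m * (m : ℝ) ^ (((m : ℝ) - 1) / 2) := by
    rw [Real.sqrt_eq_rpow, ← Real.rpow_add hm0]; ring_nf
  have hspow : (s ^ 2) ^ (((m : ℝ) - 1) / 2) = s * (s ^ 2) ^ ((m : ℝ) / 2 - 1) := by
    rw [show ((m : ℝ) - 1) / 2 = 1 / 2 + ((m : ℝ) / 2 - 1) by ring, Real.rpow_add hs2,
      ← Real.sqrt_eq_rpow, Real.sqrt_sq hs.le]
  rw [rho, if_pos hs, gammaPDFReal, if_pos hs2.le, Real.mul_rpow hm0.le hs2.le,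
    Real.div_rpow hm0.le zero_le_two, Real.rpow_sub zero_lt_two, Real.rpow_one, hmpow, hspow]
  field_simp

lemma integral_Ioi_gammaPDFReal {a r : ℝ} (ha : 0 < a) (hr : 0 < r) :
    ∫ x in Ioi 0, gammaPDFReal a r x = 1 := by
  have htot : ∫ x, gammaPDFReal a r x = 1 := by
    rw [integral_eq_lintegral_of_nonneg_ae (ae_of_all _ (gammaPDFReal_nonneg ha hr))
      (measurable_gammaPDFReal a r).aestronglyMeasurable]
    exact congrArg ENNReal.toReal (lintegral_gammaPDF_eq_one ha hr)
  rw [← integral_Ici_eq_integral_Ioi, setIntegral_eq_integral_of_forall_compl_eq_zero, htot]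
  intro x hx
  simp [gammaPDFReal, show ¬ 0 ≤ x from hx]

lemma integral_rho {m : ℕ} (hm : m ≠ 0) : ∫ s, rho m s = 1 := by
  have hm2 : (0 : ℝ) < m / 2 := by positivity
  rw [← setIntegral_eq_integral_of_forall_compl_eq_zero (s := Ioi 0)
      fun s hs => by simp [rho, show ¬ 0 < s from hs],
    ← integral_Ioi_gammaPDFReal hm2 hm2,
    ← integral_comp_rpow_Ioi_of_pos (g := gammaPDFReal (m / 2) (m / 2)) zero_lt_two]
  refine setIntegral_congr_fun measurableSet_Ioi fun s (hs : 0 < s) => ?_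
  rw [rho_eq_mul_gammaPDFReal hm hs]
  norm_num

lemma integrable_rho {m : ℕ} (hm : m ≠ 0) : Integrable (rho m) :=
  .of_integral_ne_zero (by simp [integral_rho hm])

noncomputable def rhoMeasure (m : ℕ) : Measure ℝ :=
  volume.withDensity fun s => ENNReal.ofReal (rho m s)

lemma rhoMeasure_apply {m : ℕ} (hm : m ≠ 0) {s : Set ℝ} (hs : MeasurableSet s) :
    rhoMeasure m s = ENNReal.ofReal (∫ x in s, rho m x) := by
  rw [rhoMeasure, withDensity_apply _ hs, ofReal_integral_eq_lintegral_ofReal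
    (integrable_rho hm).integrableOn (ae_of_all _ (rho_nonneg m))]

lemma isProbabilityMeasure_rhoMeasure {m : ℕ} (hm : m ≠ 0) : IsProbabilityMeasure (rhoMeasure m) :=
  ⟨by rw [rhoMeasure_apply hm MeasurableSet.univ, Measure.restrict_univ, integral_rho hm,
    ENNReal.ofReal_one]⟩

instance (m : ℕ) : NullSingletonClass (rhoMeasure m) := by
  unfold rhoMeasure; infer_instance

lemma rhoMeasure_Ici {m : ℕ} (hm : m ≠ 0) (L : ℝ) :
    rhoMeasure m (Ici L) = ENNReal.ofReal (∫ s in Ioi L, rho m s) := by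
  rw [rhoMeasure_apply hm measurableSet_Ici, integral_Ici_eq_integral_Ioi]

lemma rhoMeasure_compl_Ici {m : ℕ} (hm : m ≠ 0) (L : ℝ) :
    rhoMeasure m (Ici L)ᶜ = ENNReal.ofReal (1 - ∫ s in Ioi L, rho m s) := by
  have := isProbabilityMeasure_rhoMeasure hm
  rw [prob_compl_eq_one_sub measurableSet_Ici, rhoMeasure_Ici hm,
    ENNReal.ofReal_sub _ (setIntegral_nonneg measurableSet_Ioi fun s _ => rho_nonneg m s),
    ENNReal.ofReal_one]

section Limits

variable {ι : Type*} {l : Filter ι} {c d : ι → ℝ} {t ζ : ℝ}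

lemma tendsto_hardThreshold_add_sub (hc : Tendsto c l (𝓝 ζ)) (hd : Tendsto d l (𝓝 0))
    (ht : t ≠ |ζ|) :
    Tendsto (fun i => hardThreshold t (c i + d i) - c i) l (𝓝 (if |ζ| ≤ t then -ζ else 0)) := by
  have habs : Tendsto (fun i => |c i + d i|) l (𝓝 |ζ|) := by
    simpa using (hc.add hd).abs
  rcases ht.lt_or_gt with ht | ht
  · rw [if_neg ht.not_ge]
    refine hd.congr' ((habs.eventually (eventually_gt_nhds ht)).mono fun i hi => ?_)
    simp [hardThreshold, hi]
  · rw [if_pos ht.le]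
    refine hc.neg.congr' ((habs.eventually (eventually_lt_nhds ht)).mono fun i hi => ?_)
    simp [hardThreshold, hi.not_gt]

lemma tendsto_hardThreshold_add_sub_of_tendsto_abs_atTop (hc : Tendsto (fun i => |c i|) l atTop)
    (hd : Tendsto d l (𝓝 0)) :
    Tendsto (fun i => hardThreshold t (c i + d i) - c i) l (𝓝 0) := by
  have habs : Tendsto (fun i => |c i + d i|) l atTop := by
    refine tendsto_atTop_mono (fun i => ?_) (hc.atTop_add (hd.abs.neg))
    have := abs_add_le (c i + d i) (-d i)
    simp only [add_neg_cancel_right, abs_neg] at this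
    linarith
  refine hd.congr' ((habs.eventually_gt_atTop t).mono fun i hi => ?_)
  simp [hardThreshold, hi]

end Limits

lemma WeakConv.congr' {μ μ' : ℕ → Measure ℝ} {ν : Measure ℝ} (h : WeakConv μ ν)
    (hμ : μ =ᶠ[atTop] μ') : WeakConv μ' ν := fun f hf hC =>
  (h f hf hC).congr' (hμ.mono fun n hn => by rw [hn])

lemma weakConv_map_of_ae_tendsto {α : Type*} [MeasurableSpace α] (P : Measure α)
    [IsFiniteMeasure P] {g : ℕ → α → ℝ} {g₀ : α → ℝ} (hg : ∀ n, AEMeasurable (g n) P)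
    (hg₀ : AEMeasurable g₀ P) (hlim : ∀ᵐ q ∂P, Tendsto (fun n => g n q) atTop (𝓝 (g₀ q))) :
    WeakConv (fun n => P.map (g n)) (P.map g₀) := by
  rintro f hf ⟨C, hC⟩
  simp only [integral_map (hg _) hf.aestronglyMeasurable, integral_map hg₀ hf.aestronglyMeasurable]
  refine tendsto_integral_of_dominated_convergence (fun _ => C)
    (fun n => hf.comp_aestronglyMeasurable (hg n).aestronglyMeasurable) (integrable_const C)
    (fun n => ae_of_all _ fun q => hC _) ?_
  filter_upwards [hlim] with q hq
  exact (hf.tendsto _).comp hq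

lemma MeasureTheory.Measure.map_ite_const {α β : Type*} [MeasurableSpace α] [MeasurableSpace β]
    (μ : Measure α) {p : α → Prop} [DecidablePred p] (hp : MeasurableSet {x | p x}) (a b : β) :
    μ.map (fun x => if p x then a else b) =
      μ {x | p x} • Measure.dirac a + μ {x | ¬ p x} • Measure.dirac b := by
  ext s hs
  rw [Measure.map_apply (Measurable.ite hp measurable_const measurable_const) hs]
  by_cases ha : a ∈ s <;> by_cases hb : b ∈ s <;>
    simp [Measure.dirac_apply' _ hs, ha, hb, Set.preimage, ite_mem,
      ← measure_add_measure_compl hp, Set.compl_ofPred]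

section HardThresholdModel

variable {c ε : ℕ → ℝ}

lemma weakConv_map_hardThreshold {ν κ : Measure ℝ} [IsProbabilityMeasure ν] [IsFiniteMeasure κ]
    [NullSingletonClass κ] {ζ : ℝ} (hc : Tendsto c atTop (𝓝 ζ)) (hε : Tendsto ε atTop (𝓝 0)) :
    WeakConv (fun n => (ν.prod κ).map fun q => hardThreshold q.2 (c n + ε n * q.1) - c n)
      (κ (Ici |ζ|) • Measure.dirac (-ζ) + κ (Ici |ζ|)ᶜ • Measure.dirac 0) := by
  have hsnd : (ν.prod κ).map Prod.snd = κ := measurePreserving_snd.map_eq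
  have hlim : Measurable fun s : ℝ => if |ζ| ≤ s then -ζ else 0 :=
    Measurable.ite measurableSet_Ici measurable_const measurable_const
  have hae : ∀ᵐ q ∂ν.prod κ, q.2 ≠ |ζ| :=
    ae_of_ae_map (p := (· ≠ |ζ|)) measurable_snd.aemeasurable
      (by rw [hsnd]; exact Measure.ae_ne _ _)
  have hlimit : (ν.prod κ).map ((fun s => if |ζ| ≤ s then -ζ else 0) ∘ Prod.snd) =
      κ (Ici |ζ|) • Measure.dirac (-ζ) + κ (Ici |ζ|)ᶜ • Measure.dirac 0 := by
    rw [← Measure.map_map hlim measurable_snd, hsnd]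
    exact Measure.map_ite_const κ measurableSet_Ici _ _
  rw [← hlimit]
  refine weakConv_map_of_ae_tendsto _ (fun n => by fun_prop)
    (hlim.comp measurable_snd).aemeasurable ?_
  filter_upwards [hae] with q hq
  exact tendsto_hardThreshold_add_sub hc (by simpa using hε.mul_const q.1) hq

lemma weakConv_map_hardThreshold_of_tendsto_abs_atTop {P : Measure (ℝ × ℝ)}
    [IsProbabilityMeasure P] (hc : Tendsto (fun n => |c n|) atTop atTop)
    (hε : Tendsto ε atTop (𝓝 0)) :
    WeakConv (fun n => P.map fun q => hardThreshold q.2 (c n + ε n * q.1) - c n)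
      (Measure.dirac 0) := by
  rw [← one_smul ℝ≥0∞ (Measure.dirac (0 : ℝ)), ← measure_univ (μ := P), ← Measure.map_const]
  exact weakConv_map_of_ae_tendsto P (fun n => by fun_prop) aemeasurable_const
    (ae_of_all _ fun q =>
      tendsto_hardThreshold_add_sub_of_tendsto_abs_atTop hc (by simpa using hε.mul_const q.1))

end HardThresholdModel

theorem stmt_17_general (ξ η : ℕ → ℝ) (hξ : ∀ n, 0 < ξ n) (hη : ∀ n, 0 < η n)
    (hne : Tendsto (fun n : ℕ => Real.sqrt n * η n) atTop atTop)
    (k : ℕ → ℕ) (hk : ∀ n, 2 ≤ n → 1 ≤ k n ∧ k n < n)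
    (m : ℕ) (hm : ∀ᶠ n in atTop, n - k n = m)
    (θ σ : ℕ → ℝ) (hσ : ∀ n, 0 < σ n)
    (ζ : EReal)
    (hζ : Tendsto (fun n : ℕ => ((θ n / (σ n * ξ n * η n) : ℝ) : EReal)) atTop (nhds ζ))
    (μ : ℕ → Measure ℝ)
    (hμ : ∀ n : ℕ, μ n =
      Measure.map
        (fun p : ℝ × ℝ => (σ n)⁻¹ * (ξ n * η n)⁻¹ * (hardF (σ n) (ξ n) (η n) p - θ n))
        (jointMeas n (n - k n) (ξ n) (θ n) (σ n))) :
    (∀ ζr : ℝ, ζ = (ζr : EReal) →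
        WeakConv μ
          (ENNReal.ofReal (∫ s in Ioi |ζr|, rho m s) • Measure.dirac (-ζr) +
            ENNReal.ofReal (1 - ∫ s in Ioi |ζr|, rho m s) • Measure.dirac 0)) ∧
    ((ζ = ⊤ ∨ ζ = ⊥) → WeakConv μ (Measure.dirac 0)) := by
  have hm0 : m ≠ 0 := by
    obtain ⟨n, hnm, hn⟩ := (hm.and (eventually_ge_atTop 2)).exists
    have := hk n hn
    omega
  have := isProbabilityMeasure_rhoMeasure hm0
  set c : ℕ → ℝ := fun n => θ n / (σ n * ξ n * η n)
  have hlaw : (fun n => ((gaussianReal 0 1).prod (rhoMeasure m)).map fun q =>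
      hardThreshold q.2 (c n + (√n * η n)⁻¹ * q.1) - c n) =ᶠ[atTop] μ := by
    filter_upwards [hm, eventually_ne_atTop 0] with n hnm hn
    rw [hμ, hnm]
    exact (map_prod_gaussianReal_scaled_hardF hn (hσ n) (hξ n) (hη n)).symm
  have hε := hne.inv_tendsto_atTop
  refine ⟨fun ζr hζr => ?_, fun hinf => ?_⟩
  · subst hζr
    rw [← rhoMeasure_Ici hm0, ← rhoMeasure_compl_Ici hm0]
    exact (weakConv_map_hardThreshold (EReal.tendsto_coe.mp hζ) hε).congr' hlaw
  · have hc : Tendsto (fun n => |c n|) atTop atTop := by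
      rcases hinf with rfl | rfl
      · exact tendsto_abs_atTop_atTop.comp (EReal.tendsto_coe_nhds_top_iff.mp hζ)
      · exact tendsto_abs_atBot_atTop.comp (EReal.tendsto_coe_nhds_bot_iff.mp hζ)
    exact (weakConv_map_hardThreshold_of_tendsto_abs_atTop hc hε).congr' hlaw

/-- consistent tuning, weak limits of the law of the scaled and centered
feasible hard-thresholding estimator when `n - k_n` is eventually constant equal to `m`. -/
theorem stmt_17 (ξ η : ℕ → ℝ) (hξ : ∀ n, 0 < ξ n) (hη : ∀ n, 0 < η n)
    (hxe : Tendsto (fun n : ℕ => ξ n * η n) atTop (nhds 0))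
    (hne : Tendsto (fun n : ℕ => Real.sqrt n * η n) atTop atTop)
    (k : ℕ → ℕ) (hk : ∀ n, 2 ≤ n → 1 ≤ k n ∧ k n < n)
    (m : ℕ) (hm : ∀ᶠ n in atTop, n - k n = m)
    (θ σ : ℕ → ℝ) (hσ : ∀ n, 0 < σ n)
    (ζ : EReal)
    (hζ : Tendsto (fun n : ℕ => ((θ n / (σ n * ξ n * η n) : ℝ) : EReal)) atTop (nhds ζ))
    (μ : ℕ → Measure ℝ)
    (hμ : ∀ n : ℕ, μ n =
      Measure.map
        (fun p : ℝ × ℝ => (σ n)⁻¹ * (ξ n * η n)⁻¹ * (hardF (σ n) (ξ n) (η n) p - θ n))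
        (jointMeas n (n - k n) (ξ n) (θ n) (σ n))) :
    (∀ ζr : ℝ, ζ = (ζr : EReal) →
        WeakConv μ
          (ENNReal.ofReal (∫ s in Ioi |ζr|, rho m s) • Measure.dirac (-ζr) +
            ENNReal.ofReal (1 - ∫ s in Ioi |ζr|, rho m s) • Measure.dirac 0)) ∧
    ((ζ = ⊤ ∨ ζ = ⊥) → WeakConv μ (Measure.dirac 0)) :=
  stmt_17_general ξ η hξ hη hne k hk m hm θ σ hσ ζ hζ μ hμ
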